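/- arXiv:2105.06644 — 2 statements merged into one kernel-verified Lean document; each statement's English description precedes it below -/
import Mathlib

section
/- If X is a strongly star-Lindelöf topological space of cardinality less than cov(M) (the covering number of the meager ideal on the reals), then X is strongly star-Rothberger. -/
open Set Filter

variable {X : Type u}

def star {X : Type u} (A : Set X) (U : Set (Set X)) : Set X :=
  ⋃₀ {u ∈ U | (u ∩ A).Nonempty}

def IsOpenCover {X : Type u} [TopologicalSpace X] (U : Set (Set X)) : Prop :=
  (∀ u ∈ U, IsOpen u) ∧ ⋃₀ U = univ

noncomputable def domNum : Cardinal :=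
  sInf {c | ∃ D : Set (ℕ → ℕ), Cardinal.mk D = c ∧
    ∀ f : ℕ → ℕ, ∃ g ∈ D, ∀ᶠ n in atTop, f n ≤ g n}

noncomputable def boundNum : Cardinal :=
  sInf {c | ∃ B : Set (ℕ → ℕ), Cardinal.mk B = c ∧
    ¬ ∃ g : ℕ → ℕ, ∀ f ∈ B, ∀ᶠ n in atTop, f n ≤ g n}

noncomputable def covMeager : Cardinal :=
  sInf {c | ∃ F : Set (ℕ → ℕ), Cardinal.mk F = c ∧
    ¬ ∃ g : ℕ → ℕ, ∀ f ∈ F, {n | g n = f n}.Infinite}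

def StronglyStarLindelof (X : Type u) [TopologicalSpace X] : Prop :=
  ∀ U : Set (Set X), IsOpenCover U →
    ∃ C : Set X, C.Countable ∧ star C U = univ

def AbsStronglyStarLindelof (X : Type u) [TopologicalSpace X] : Prop :=
  ∀ U : Set (Set X), IsOpenCover U → ∀ D : Set X, Dense D →
    ∃ C : Set X, C ⊆ D ∧ C.Countable ∧ star C U = univ

def StronglyStarMenger (X : Type u) [TopologicalSpace X] : Prop :=
  ∀ U : ℕ → Set (Set X), (∀ n, IsOpenCover (U n)) →
    ∃ F : ℕ → Finset X, ⋃ n, star (↑(F n)) (U n) = univ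

def AbsStronglyStarMenger (X : Type u) [TopologicalSpace X] : Prop :=
  ∀ U : ℕ → Set (Set X), (∀ n, IsOpenCover (U n)) → ∀ D : Set X, Dense D →
    ∃ F : ℕ → Finset X, (∀ n, ↑(F n) ⊆ D) ∧ ⋃ n, star (↑(F n)) (U n) = univ

def SelStronglyStarMenger (X : Type u) [TopologicalSpace X] : Prop :=
  ∀ U : ℕ → Set (Set X), (∀ n, IsOpenCover (U n)) →
    ∀ D : ℕ → Set X, (∀ n, Dense (D n)) →
      ∃ F : ℕ → Finset X, (∀ n, ↑(F n) ⊆ D n) ∧ ⋃ n, star (↑(F n)) (U n) = univ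

def StronglyStarHurewicz (X : Type u) [TopologicalSpace X] : Prop :=
  ∀ U : ℕ → Set (Set X), (∀ n, IsOpenCover (U n)) →
    ∃ F : ℕ → Finset X, ∀ x : X, ∀ᶠ n in atTop, x ∈ star (↑(F n)) (U n)

def SelStronglyStarHurewicz (X : Type u) [TopologicalSpace X] : Prop :=
  ∀ U : ℕ → Set (Set X), (∀ n, IsOpenCover (U n)) →
    ∀ D : ℕ → Set X, (∀ n, Dense (D n)) →
      ∃ F : ℕ → Finset X, (∀ n, ↑(F n) ⊆ D n) ∧
        ∀ x : X, ∀ᶠ n in atTop, x ∈ star (↑(F n)) (U n)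

def StronglyStarRothberger (X : Type u) [TopologicalSpace X] : Prop :=
  ∀ U : ℕ → Set (Set X), (∀ n, IsOpenCover (U n)) →
    ∃ x : ℕ → X, ⋃ n, star {x n} (U n) = univ

def SelStronglyStarRothberger (X : Type u) [TopologicalSpace X] : Prop :=
  ∀ U : ℕ → Set (Set X), (∀ n, IsOpenCover (U n)) →
    ∀ D : ℕ → Set X, (∀ n, Dense (D n)) →
      ∃ d : ℕ → X, (∀ n, d n ∈ D n) ∧ ⋃ n, star {d n} (U n) = univ

def DiscreteIn {X : Type u} [TopologicalSpace X] (C : Set X) : Prop :=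
  ∀ x ∈ C, ∃ O : Set X, IsOpen O ∧ O ∩ C = {x}

def CountableExtent (X : Type u) [TopologicalSpace X] : Prop :=
  ∀ C : Set X, IsClosed C → DiscreteIn C → C.Countable

def SelSScdOGamma (X : Type u) [TopologicalSpace X] : Prop :=
  ∀ U : ℕ → Set (Set X), (∀ n, IsOpenCover (U n)) →
    ∀ D : ℕ → Set X, (∀ n, Dense (D n)) →
      ∃ C : ℕ → Set X, (∀ n, C n ⊆ D n ∧ IsClosed (C n) ∧ DiscreteIn (C n)) ∧
        ∀ x : X, ∀ᶠ n in atTop, x ∈ star (C n) (U n)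

def SelSScdOO (X : Type u) [TopologicalSpace X] : Prop :=
  ∀ U : ℕ → Set (Set X), (∀ n, IsOpenCover (U n)) →
    ∀ D : ℕ → Set X, (∀ n, Dense (D n)) →
      ∃ C : ℕ → Set X, (∀ n, C n ⊆ D n ∧ IsClosed (C n) ∧ DiscreteIn (C n)) ∧
        ⋃ n, star (C n) (U n) = univ

def StarSigmaK (X : Type u) [TopologicalSpace X] (K : Set (Set X)) : Prop :=
  ∀ U : Set (Set X), IsOpenCover U →
    ∃ E : ℕ → Set X, (∀ m, E m ∈ K) ∧ star (⋃ m, E m) U = univ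

def AbsStarSigmaK (X : Type u) [TopologicalSpace X] (K : Set (Set X)) : Prop :=
  ∀ D : Set X, Dense D → ∀ U : Set (Set X), IsOpenCover U →
    ∃ E : ℕ → Set X, (∀ m, E m ∈ K ∧ E m ⊆ D) ∧ star (⋃ m, E m) U = univ

def AbsNbhdStarMenger (X : Type u) [TopologicalSpace X] : Prop :=
  ∀ U : ℕ → Set (Set X), (∀ n, IsOpenCover (U n)) → ∀ D : Set X, Dense D →
    ∃ F : ℕ → Finset X, (∀ n, ↑(F n) ⊆ D) ∧
      ∀ O : ℕ → Set X, (∀ n, IsOpen (O n) ∧ ↑(F n) ⊆ O n) →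
        ⋃ n, star (O n) (U n) = univ

def AbsNbhdStarHurewicz (X : Type u) [TopologicalSpace X] : Prop :=
  ∀ U : ℕ → Set (Set X), (∀ n, IsOpenCover (U n)) → ∀ D : Set X, Dense D →
    ∃ F : ℕ → Finset X, (∀ n, ↑(F n) ⊆ D) ∧
      ∀ O : ℕ → Set X, (∀ n, IsOpen (O n) ∧ ↑(F n) ⊆ O n) →
        ∀ x : X, ∀ᶠ n in atTop, x ∈ star (O n) (U n)


/-! Enumerate a countable star kernel of the `n`-th cover as `c n`. Each point `x` determines
`f x : ℕ → ℕ` choosing, for every `n`, a kernel point `c n (f x n)` whose star contains `x`.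
There are fewer than cov(M) such functions, so a single `g` agrees with each of them infinitely
often, and the selection `n ↦ c n (g n)` stars every point at some agreement index. -/

theorem mem_star {A : Set X} {U : Set (Set X)} {x : X} :
    x ∈ star A U ↔ ∃ u ∈ U, (u ∩ A).Nonempty ∧ x ∈ u := by
  refine mem_sUnion.trans ?_
  simp only [mem_ofPred_eq, and_assoc]

theorem star_mono_left {A B : Set X} (hAB : A ⊆ B) (U : Set (Set X)) :
    star A U ⊆ star B U := fun _ hx => by
  obtain ⟨u, hu, hA, hxu⟩ := mem_star.mp hx
  exact mem_star.mpr ⟨u, hu, hA.mono (inter_subset_inter_right _ hAB), hxu⟩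

theorem star_iUnion {ι : Sort*} (A : ι → Set X) (U : Set (Set X)) :
    star (⋃ i, A i) U = ⋃ i, star (A i) U := by
  ext x
  simp only [mem_star, mem_iUnion, inter_iUnion, nonempty_iUnion]
  grind

theorem star_range (c : ℕ → X) (U : Set (Set X)) :
    star (range c) U = ⋃ k, star {c k} U := by
  rw [← star_iUnion, iUnion_singleton_eq_range]

theorem StronglyStarLindelof.exists_seq_star_eq_univ [TopologicalSpace X] [Nonempty X]
    (h : StronglyStarLindelof X) {U : Set (Set X)} (hU : IsOpenCover U) :
    ∃ c : ℕ → X, star (range c) U = univ := by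
  obtain ⟨C, hC, hCU⟩ := h U hU
  -- a point is added so that the countable set can be enumerated even when it is empty
  obtain ⟨c, hc⟩ := (hC.insert (Classical.arbitrary X)).exists_eq_range (insert_nonempty _ _)
  exact ⟨c, eq_univ_of_subset (hc ▸ star_mono_left (subset_insert _ _) U) hCU⟩

theorem exists_frequently_eq_of_mk_lt_covMeager {ι : Type u} (f : ι → ℕ → ℕ)
    (hι : Cardinal.mk ι < Cardinal.lift.{u} covMeager) :
    ∃ g : ℕ → ℕ, ∀ i, {n | g n = f i n}.Infinite := by
  by_contra hf
  have hle : covMeager ≤ Cardinal.mk (range f) :=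
    csInf_le' ⟨range f, rfl, fun ⟨g, hg⟩ => hf ⟨g, fun i => hg _ (mem_range_self i)⟩⟩
  have hrange : Cardinal.lift.{u} (Cardinal.mk (range f)) ≤ Cardinal.mk ι := by
    simpa using Cardinal.mk_range_le_lift (f := f)
  exact (Cardinal.lift_le.mpr hle).not_gt (hrange.trans_lt hι)

theorem stmt2 {X : Type u} [TopologicalSpace X] [Nonempty X]
    (hssl : StronglyStarLindelof X) (hcard : Cardinal.mk X < Cardinal.lift.{u} covMeager) :
    StronglyStarRothberger X := by
  intro U hU
  choose c hc using fun n => hssl.exists_seq_star_eq_univ (hU n)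
  have hindex : ∀ x n, ∃ k, x ∈ star {c n k} (U n) := fun x n =>
    mem_iUnion.mp (star_range (c n) (U n) ▸ hc n ▸ mem_univ x)
  choose f hf using hindex
  obtain ⟨g, hg⟩ := exists_frequently_eq_of_mk_lt_covMeager f hcard
  refine ⟨fun n => c n (g n), eq_univ_of_forall fun x => ?_⟩
  obtain ⟨n, hn⟩ := (hg x).nonempty
  have hgn : g n = f x n := hn
  exact mem_iUnion.mpr ⟨n, show x ∈ star {c n (g n)} (U n) from hgn ▸ hf x n⟩
end

section
/- Let X be a space of cardinality less than 𝔡 and let 𝒦 be a family of subsets of X closed under finite unions. If X is absolutely star-σ𝒦, then X satisfies selectively SS*_𝒦(O,O): for each sequence (Uₙ) of open covers and each sequence (Dₙ) of dense subsets of X there are Kₙ ∈ 𝒦 with Kₙ ⊆ Dₙ and {St(Kₙ,Uₙ) : n ∈ ω} an open cover of X. -/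
open Set Filter

variable {X : Type u}

/-!
Fix the open covers `U n` and dense sets `D n`. Applying absolute star-σ𝒦 to each pair gives
sets `E n m ∈ 𝒦` inside `D n` whose union stars `U n` onto `X`, so every `x` has a function
`f x : ℕ → ℕ` with `x ∈ St(E n (f x n), U n)`. Since `|X| < 𝔡`, these functions do not
dominate: some `g` exceeds every `f x` infinitely often. The finite unions
`Kₙ = ⋃_{m ≤ g n} E n m` lie in `𝒦`, and `x ∈ St(Kₙ, U n)` whenever `f x n < g n`.
-/

lemma star_mono {X : Type u} {A B : Set X} (h : A ⊆ B) (U : Set (Set X)) :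
    star A U ⊆ star B U :=
  fun _ ⟨u, ⟨hu, y, hyu, hyA⟩, hxu⟩ => ⟨u, ⟨hu, y, hyu, h hyA⟩, hxu⟩

lemma mem_star_iUnion {X : Type u} {ι : Sort*} {A : ι → Set X} {U : Set (Set X)} {x : X} :
    x ∈ star (⋃ i, A i) U ↔ ∃ i, x ∈ star (A i) U := by
  constructor
  · rintro ⟨u, ⟨hu, y, hyu, hyA⟩, hxu⟩
    obtain ⟨i, hyi⟩ := mem_iUnion.mp hyA
    exact ⟨i, u, ⟨hu, y, hyu, hyi⟩, hxu⟩
  · rintro ⟨i, hx⟩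
    exact star_mono (subset_iUnion A i) U hx

lemma exists_frequently_lt_of_mk_lt_domNum {ι : Type u} (f : ι → ℕ → ℕ)
    (hcard : Cardinal.mk ι < Cardinal.lift.{u} domNum) :
    ∃ g : ℕ → ℕ, ∀ i, ∃ᶠ n in atTop, f i n < g n := by
  by_contra! hdom
  have hrange : domNum ≤ Cardinal.mk (range f) := by
    refine csInf_le' ⟨range f, rfl, fun g => ?_⟩
    obtain ⟨i, hi⟩ := hdom g
    exact ⟨f i, mem_range_self i, hi⟩
  have hsmall : Cardinal.lift.{u} (Cardinal.mk (range f)) ≤ Cardinal.lift.{0} (Cardinal.mk ι) :=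
    Cardinal.mk_range_le_lift
  rw [Cardinal.lift_id'] at hsmall
  exact (Cardinal.lift_le.mpr hrange).not_gt (hsmall.trans_lt hcard)

lemma exists_iUnion_star_accumulate_eq_univ {X : Type u} {U : ℕ → Set (Set X)}
    {E : ℕ → ℕ → Set X} (hE : ∀ n, star (⋃ m, E n m) (U n) = univ)
    (hcard : Cardinal.mk X < Cardinal.lift.{u} domNum) :
    ∃ g : ℕ → ℕ, ⋃ n, star (accumulate (E n) (g n)) (U n) = univ := by
  have hsel (x : X) (n : ℕ) : ∃ m, x ∈ star (E n m) (U n) :=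
    mem_star_iUnion.mp (hE n ▸ mem_univ x)
  choose f hf using hsel
  obtain ⟨g, hg⟩ := exists_frequently_lt_of_mk_lt_domNum f hcard
  refine ⟨g, eq_univ_of_forall fun x => mem_iUnion.mpr ?_⟩
  obtain ⟨n, hn⟩ := (hg x).exists
  exact ⟨n, star_mono (fun _ hy => mem_accumulate.mpr ⟨_, hn.le, hy⟩) (U n) (hf x n)⟩

lemma accumulate_mem_of_supClosed {X : Type u} {K : Set (Set X)} (hK : SupClosed K)
    {E : ℕ → Set X} (hE : ∀ m, E m ∈ K) (n : ℕ) : accumulate E n ∈ K :=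
  hK.biSup_mem_of_nonempty (finite_Iic n) nonempty_Iic fun m _ => hE m

theorem stmt4 {X : Type u} [TopologicalSpace X] (K : Set (Set X))
    (hK : ∀ A ∈ K, ∀ B ∈ K, A ∪ B ∈ K)
    (hcard : Cardinal.mk X < Cardinal.lift.{u} domNum) (hstar : AbsStarSigmaK X K) :
    ∀ U : ℕ → Set (Set X), (∀ n, IsOpenCover (U n)) →
      ∀ D : ℕ → Set X, (∀ n, Dense (D n)) →
        ∃ Ks : ℕ → Set X, (∀ n, Ks n ∈ K ∧ Ks n ⊆ D n) ∧
          ⋃ n, star (Ks n) (U n) = univ := by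
  intro U hU D hD
  choose E hEK hE using fun n => hstar (D n) (hD n) (U n) (hU n)
  obtain ⟨g, hg⟩ := exists_iUnion_star_accumulate_eq_univ hE hcard
  have hKsup : SupClosed K := fun A hA B hB => hK A hA B hB
  refine ⟨fun n => accumulate (E n) (g n), fun n => ⟨?_, ?_⟩, hg⟩
  · exact accumulate_mem_of_supClosed hKsup (fun m => (hEK n m).1) (g n)
  · exact (accumulate_subset_iUnion _).trans (iUnion_subset fun m => (hEK n m).2)
end
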